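/- If Ẑ is the mean of K i.i.d. nonnegative random variables with mean Z > 0 and E[w⁴] < ∞, then |E[log Ẑ] − log Z + Var(w)/(2KZ²)| = O(1/K²); more precisely, assuming additionally w ≥ c > 0 a.s., there is a constant C depending only on the first four moments of w and on c, Z such that |E[log Ẑ] − log Z + Var(w)/(2KZ²)| ≤ C/K². -/

import Mathlib

/-!
Write `Ẑ = Z + S_K / K` with `S_K = ∑_{k<K} (w_k - Z)`, and let `σ² = E (w - Z)²`,
`κ_j = E (w - Z)^j`. For `x ≥ m := min c Z` the third-order Taylor polynomial of `log` at `Z`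
approximates `log x` up to `(x - Z)⁴ / (4 m Z³)`. By independence `E S_K = 0`, `E S_K² = K σ²`,
`E S_K³ = K κ₃` and `E S_K⁴ = K κ₄ + 3 K (K - 1) σ⁴`, so in expectation the quadratic Taylor term
produces `-σ² / (2 K Z²)`, while the cubic term and the remainder are `O(1 / K²)`.
-/

open MeasureTheory ProbabilityTheory Set Real Finset

lemma le_of_hasDerivAt_of_sub_mul_nonneg {f f' : ℝ → ℝ} {a x : ℝ}
    (hf : ∀ t ∈ uIcc a x, HasDerivAt f (f' t) t)
    (hf' : ∀ t ∈ uIcc a x, 0 ≤ (t - a) * f' t) : f a ≤ f x := by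
  have hcont : ContinuousOn f (uIcc a x) := fun t ht =>
    (hf t ht).continuousAt.continuousWithinAt
  rcases le_total a x with hax | hxa
  · rw [uIcc_of_le hax] at hf hf' hcont
    refine monotoneOn_of_hasDerivWithinAt_nonneg (convex_Icc a x) hcont
      (fun t ht => (hf t (interior_subset ht)).hasDerivWithinAt) (fun t ht => ?_)
      (left_mem_Icc.2 hax) (right_mem_Icc.2 hax) hax
    rw [interior_Icc] at ht
    exact nonneg_of_mul_nonneg_right (hf' t (Ioo_subset_Icc_self ht)) (sub_pos.2 ht.1)
  · rw [uIcc_of_ge hxa] at hf hf' hcont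
    refine antitoneOn_of_hasDerivWithinAt_nonpos (convex_Icc x a) hcont
      (fun t ht => (hf t (interior_subset ht)).hasDerivWithinAt) (fun t ht => ?_)
      (left_mem_Icc.2 hxa) (right_mem_Icc.2 hxa) hxa
    rw [interior_Icc] at ht
    exact nonpos_of_mul_nonneg_right (hf' t (Ioo_subset_Icc_self ht)) (sub_neg.2 ht.2)

noncomputable def logTaylor3 (Z x : ℝ) : ℝ :=
  log Z + (x - Z) / Z - (x - Z) ^ 2 / (2 * Z ^ 2) + (x - Z) ^ 3 / (3 * Z ^ 3)

lemma hasDerivAt_log_sub_logTaylor3 {Z t : ℝ} (hZ : Z ≠ 0) (ht : 0 < t) :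
    HasDerivAt (fun x => log x - logTaylor3 Z x) (-(t - Z) ^ 3 / (t * Z ^ 3)) t := by
  have hd : HasDerivAt (fun x => x - Z) 1 t := (hasDerivAt_id t).sub_const Z
  have H := (hasDerivAt_log ht.ne').sub
    (((((hasDerivAt_const t (log Z)).add (hd.div_const Z)).sub
      ((hd.pow 2).div_const (2 * Z ^ 2))).add ((hd.pow 3).div_const (3 * Z ^ 3))))
  refine H.congr_deriv ?_
  field_simp
  ring

lemma abs_log_sub_logTaylor3_le {m Z x : ℝ} (hm : 0 < m) (hmZ : m ≤ Z) (hx : m ≤ x) :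
    |log x - logTaylor3 Z x| ≤ (x - Z) ^ 4 / (4 * m * Z ^ 3) := by
  have hZ : 0 < Z := hm.trans_le hmZ
  have hm_le : ∀ t ∈ uIcc Z x, m ≤ t := fun t ht => (le_min hmZ hx).trans ht.1
  have hrem : ∀ t ∈ uIcc Z x, HasDerivAt (fun x => log x - logTaylor3 Z x)
      (-(t - Z) ^ 3 / (t * Z ^ 3)) t := fun t ht =>
    hasDerivAt_log_sub_logTaylor3 hZ.ne' (hm.trans_le (hm_le t ht))
  have hZZ : log Z - logTaylor3 Z Z = 0 := by simp [logTaylor3]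
  have upper : log x - logTaylor3 Z x ≤ 0 := by
    have := le_of_hasDerivAt_of_sub_mul_nonneg (f := fun x => -(log x - logTaylor3 Z x))
      (fun t ht => (hrem t ht).neg) fun t ht => by
        have ht0 : 0 < t := hm.trans_le (hm_le t ht)
        rw [show (t - Z) * -(-(t - Z) ^ 3 / (t * Z ^ 3)) = (t - Z) ^ 4 / (t * Z ^ 3) by ring]
        positivity
    simp only [hZZ] at this
    linarith
  -- For `t ≥ m`, the derivative of the quartic dominates `|(t - Z)³ / (t Z³)|`.
  have lower : -((x - Z) ^ 4 / (4 * m * Z ^ 3)) ≤ log x - logTaylor3 Z x := by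
    have := le_of_hasDerivAt_of_sub_mul_nonneg
      (f := fun x => (x - Z) ^ 4 / (4 * m * Z ^ 3) + (log x - logTaylor3 Z x))
      (f' := fun t => (t - Z) ^ 3 / (m * Z ^ 3) - (t - Z) ^ 3 / (t * Z ^ 3))
      (fun t ht => by
        refine ((((hasDerivAt_id' t).sub_const Z).pow 4).div_const (4 * m * Z ^ 3)).add
          (hrem t ht) |>.congr_deriv ?_
        field_simp
        ring) fun t ht => by
      rw [show (t - Z) * ((t - Z) ^ 3 / (m * Z ^ 3) - (t - Z) ^ 3 / (t * Z ^ 3))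
          = (t - Z) ^ 4 / Z ^ 3 * (1 / m - 1 / t) by ring]
      exact mul_nonneg (by positivity)
        (sub_nonneg.2 (one_div_le_one_div_of_le hm (hm_le t ht)))
    simp only [sub_self, hZZ, zero_pow four_ne_zero, zero_div, add_zero] at this
    linarith
  rw [abs_le]
  exact ⟨lower, upper.trans (by positivity)⟩

section

variable {Ω : Type*} [MeasurableSpace Ω] {μ : Measure Ω}

lemma MeasureTheory.MemLp.integrable_pow_of_le [IsFiniteMeasure μ] {f : Ω → ℝ} {p j : ℕ}
    (hf : MemLp f p μ) (hj : j ≤ p) : Integrable (fun ω => f ω ^ j) μ :=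
  ((hf.mono_exponent (by exact_mod_cast hj)).integrable_norm_pow').mono'
    (hf.aestronglyMeasurable.pow j) (ae_of_all _ fun ω => by simp [norm_pow])

lemma MeasureTheory.MemLp.integrable_sub_const_pow [IsFiniteMeasure μ] {f : Ω → ℝ} {p j : ℕ}
    (hf : MemLp f p μ) (c : ℝ) (hj : j ≤ p) : Integrable (fun ω => (f ω - c) ^ j) μ :=
  (hf.sub (memLp_const c)).integrable_pow_of_le hj

lemma ProbabilityTheory.IndepFun.integral_add_pow [IsFiniteMeasure μ] {S X : Ω → ℝ}
    (hSX : IndepFun S X μ) {n : ℕ} (hS : MemLp S n μ) (hX : MemLp X n μ) :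
    ∫ ω, (S ω + X ω) ^ n ∂μ
      = ∑ i ∈ range (n + 1), (∫ ω, S ω ^ i ∂μ) * (∫ ω, X ω ^ (n - i) ∂μ) * n.choose i := by
  have hpow : ∀ i j : ℕ, IndepFun (fun ω => S ω ^ i) (fun ω => X ω ^ j) μ := fun i j =>
    hSX.comp (measurable_id.pow_const i) (measurable_id.pow_const j)
  simp_rw [add_pow]
  rw [integral_finsetSum]
  · refine sum_congr rfl fun i _ => ?_
    rw [integral_mul_const, (hpow i (n - i)).integral_fun_mul_eq_mul_integral
      (hS.aestronglyMeasurable.pow i) (hX.aestronglyMeasurable.pow (n - i))]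
  · intro i hi
    exact ((hpow i (n - i)).integrable_mul (hS.integrable_pow_of_le (mem_range_succ_iff.1 hi))
      (hX.integrable_pow_of_le (Nat.sub_le n i))).mul_const _

variable [IsProbabilityMeasure μ]

lemma ProbabilityTheory.iIndepFun.integral_sum_pow {X : ℕ → Ω → ℝ}
    (hmeas : ∀ k, Measurable (X k)) (hindep : iIndepFun X μ) (hL4 : ∀ k, MemLp (X k) 4 μ)
    {σ2 κ3 κ4 : ℝ} (h1 : ∀ k, ∫ ω, X k ω ∂μ = 0) (h2 : ∀ k, ∫ ω, X k ω ^ 2 ∂μ = σ2)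
    (h3 : ∀ k, ∫ ω, X k ω ^ 3 ∂μ = κ3) (h4 : ∀ k, ∫ ω, X k ω ^ 4 ∂μ = κ4) (n : ℕ) :
    ∫ ω, ∑ k ∈ range n, X k ω ∂μ = 0 ∧ ∫ ω, (∑ k ∈ range n, X k ω) ^ 2 ∂μ = n * σ2 ∧
      ∫ ω, (∑ k ∈ range n, X k ω) ^ 3 ∂μ = n * κ3 ∧
      ∫ ω, (∑ k ∈ range n, X k ω) ^ 4 ∂μ = n * κ4 + 3 * n * (n - 1) * σ2 ^ 2 := by
  induction n with
  | zero => simp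
  | succ n ih =>
    obtain ⟨ih1, ih2, ih3, ih4⟩ := ih
    have hS : MemLp (∑ k ∈ range n, X k) 4 μ := memLp_finsetSum' _ fun k _ => hL4 k
    have hindep_n := hindep.indepFun_finsetSum_of_notMem hmeas (notMem_range_self (n := n))
    have key : ∀ j ≤ 4, ∫ ω, (∑ k ∈ range (n + 1), X k ω) ^ j ∂μ = ∑ i ∈ range (j + 1),
        (∫ ω, (∑ k ∈ range n, X k ω) ^ i ∂μ) * (∫ ω, X n ω ^ (j - i) ∂μ) * j.choose i := by
      intro j hj
      have := hindep_n.integral_add_pow (hS.mono_exponent (by exact_mod_cast hj))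
        ((hL4 n).mono_exponent (by exact_mod_cast hj))
      simpa [sum_range_succ, Finset.sum_apply] using this
    refine ⟨?_, ?_, ?_, ?_⟩
    · simpa [sum_range_succ, ih1, h1] using key 1 (by norm_num)
    · rw [key 2 (by norm_num)]; simp [sum_range_succ, ih1, ih2, h1, h2]; ring
    · rw [key 3 (by norm_num)]; simp [sum_range_succ, ih1, ih2, ih3, h1, h2, h3]; ring
    · rw [key 4 (by norm_num)]
      simp [sum_range_succ, ih1, ih2, ih3, ih4, h1, h2, h3, h4, Nat.choose]
      ring

variable {Y : Ω → ℝ}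

lemma integrable_logTaylor3 (hY : MemLp Y 3 μ) (Z : ℝ) :
    Integrable (fun ω => logTaylor3 Z (Y ω)) μ := by
  have h1 := (hY.integrable_sub_const_pow Z (j := 1) (by norm_num)).div_const Z
  have h2 := (hY.integrable_sub_const_pow Z (j := 2) (by norm_num)).div_const (2 * Z ^ 2)
  have h3 := (hY.integrable_sub_const_pow Z (j := 3) (by norm_num)).div_const (3 * Z ^ 3)
  simp only [pow_one] at h1
  exact (((integrable_const _).add h1).sub h2).add h3

lemma integral_logTaylor3 (hY : MemLp Y 3 μ) (Z : ℝ) :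
    ∫ ω, logTaylor3 Z (Y ω) ∂μ = log Z + (∫ ω, Y ω - Z ∂μ) / Z
      - (∫ ω, (Y ω - Z) ^ 2 ∂μ) / (2 * Z ^ 2) + (∫ ω, (Y ω - Z) ^ 3 ∂μ) / (3 * Z ^ 3) := by
  have h1 := (hY.integrable_sub_const_pow Z (j := 1) (by norm_num)).div_const Z
  have h2 := (hY.integrable_sub_const_pow Z (j := 2) (by norm_num)).div_const (2 * Z ^ 2)
  have h3 := (hY.integrable_sub_const_pow Z (j := 3) (by norm_num)).div_const (3 * Z ^ 3)
  simp only [pow_one] at h1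
  have h01 : Integrable (fun ω => log Z + (Y ω - Z) / Z) μ := (integrable_const _).add h1
  have h012 : Integrable (fun ω => log Z + (Y ω - Z) / Z - (Y ω - Z) ^ 2 / (2 * Z ^ 2)) μ :=
    h01.sub h2
  unfold logTaylor3
  rw [integral_add h012 h3, integral_sub h01 h2, integral_add (integrable_const _) h1,
    integral_const, integral_div, integral_div, integral_div]
  simp

lemma abs_integral_log_sub_integral_logTaylor3_le {m Z : ℝ} (hY : MemLp Y 4 μ) (hm : 0 < m)
    (hmZ : m ≤ Z) (hYm : ∀ᵐ ω ∂μ, m ≤ Y ω) :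
    |∫ ω, log (Y ω) ∂μ - ∫ ω, logTaylor3 Z (Y ω) ∂μ|
      ≤ (∫ ω, (Y ω - Z) ^ 4 ∂μ) / (4 * m * Z ^ 3) := by
  have hT := integrable_logTaylor3 (hY.mono_exponent (by norm_num)) Z
  have hbound : ∀ᵐ ω ∂μ, |log (Y ω) - logTaylor3 Z (Y ω)| ≤ (Y ω - Z) ^ 4 / (4 * m * Z ^ 3) := by
    filter_upwards [hYm] with ω hω using abs_log_sub_logTaylor3_le hm hmZ hω
  have hR : Integrable (fun ω => log (Y ω) - logTaylor3 Z (Y ω)) μ :=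
    ((hY.integrable_sub_const_pow Z le_rfl).div_const _).mono'
      ((measurable_log.sub (by unfold logTaylor3; fun_prop)).comp_aemeasurable
        hY.aemeasurable).aestronglyMeasurable hbound
  have hlog : Integrable (fun ω => log (Y ω)) μ :=
    (hR.add hT).congr (ae_of_all _ fun ω => by simp)
  rw [← integral_sub hlog hT, ← integral_div]
  exact (abs_integral_le_integral_abs).trans (integral_mono_ae hR.abs
    ((hY.integrable_sub_const_pow Z le_rfl).div_const _) hbound)

end

section

variable {Ω : Type*} [MeasurableSpace Ω] {μ : Measure Ω} [IsProbabilityMeasure μ]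
  {w : ℕ → Ω → ℝ} {Z : ℝ}

lemma integral_mean_sub_pow (hmeas : ∀ k, Measurable (w k)) (hindep : iIndepFun w μ)
    (hid : ∀ k, IdentDistrib (w k) (w 0) μ μ) (hmean : ∫ ω, w 0 ω ∂μ = Z)
    (hL4 : MemLp (w 0) 4 μ) {K : ℕ} (hK : K ≠ 0) :
    ∫ ω, ((∑ k ∈ range K, w k ω) / K - Z) ∂μ = 0 ∧
      ∫ ω, ((∑ k ∈ range K, w k ω) / K - Z) ^ 2 ∂μ = (∫ ω, (w 0 ω - Z) ^ 2 ∂μ) / K ∧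
      ∫ ω, ((∑ k ∈ range K, w k ω) / K - Z) ^ 3 ∂μ = (∫ ω, (w 0 ω - Z) ^ 3 ∂μ) / K ^ 2 ∧
      ∫ ω, ((∑ k ∈ range K, w k ω) / K - Z) ^ 4 ∂μ
        = (∫ ω, (w 0 ω - Z) ^ 4 ∂μ + 3 * (K - 1) * (∫ ω, (w 0 ω - Z) ^ 2 ∂μ) ^ 2) / K ^ 3 := by
  set X : ℕ → Ω → ℝ := fun k ω => w k ω - Z with hX
  have hXmom : ∀ k j, ∫ ω, X k ω ^ j ∂μ = ∫ ω, X 0 ω ^ j ∂μ := fun k j =>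
    (((hid k).comp (measurable_id.sub_const Z)).comp (measurable_id.pow_const j)).integral_eq
  have hX0 : ∫ ω, X 0 ω ∂μ = 0 := by
    rw [integral_sub (hL4.integrable (by norm_num)) (integrable_const Z), hmean]; simp
  obtain ⟨h1, h2, h3, h4⟩ := iIndepFun.integral_sum_pow (X := X)
    (fun k => (hmeas k).sub_const Z) (hindep.comp _ fun _ => measurable_id.sub_const Z)
    (fun k => ((hid k).symm.memLp_snd hL4).sub (memLp_const Z))
    (fun k => by simpa using (hXmom k 1).trans (by simpa using hX0)) (hXmom · 2) (hXmom · 3)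
    (hXmom · 4) K
  have hdev : ∀ ω, (∑ k ∈ range K, w k ω) / K - Z = (∑ k ∈ range K, X k ω) / K := fun ω => by
    simp only [hX, sum_sub_distrib, sum_const, card_range, nsmul_eq_mul]
    field_simp
  simp only [hdev, div_pow, integral_div, h1, h2, h3, h4]
  refine ⟨zero_div _, ?_, ?_, ?_⟩ <;> field_simp <;> ring

lemma abs_integral_log_mean_sub_log_add_variance_le (hmeas : ∀ k, Measurable (w k))
    (hindep : iIndepFun w μ) (hid : ∀ k, IdentDistrib (w k) (w 0) μ μ) {c : ℝ} (hc : 0 < c)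
    (hlb : ∀ k, ∀ᵐ ω ∂μ, c ≤ w k ω) (hZ : 0 < Z) (hmean : ∫ ω, w 0 ω ∂μ = Z)
    (hL4 : MemLp (w 0) 4 μ) {K : ℕ} (hK : 1 ≤ K) :
    |(∫ ω, log ((∑ k ∈ range K, w k ω) / K) ∂μ) - log Z + variance (w 0) μ / (2 * K * Z ^ 2)|
      ≤ (|∫ ω, (w 0 ω - Z) ^ 3 ∂μ| / (3 * Z ^ 3)
        + (∫ ω, (w 0 ω - Z) ^ 4 ∂μ + 3 * variance (w 0) μ ^ 2) / (4 * min c Z * Z ^ 3))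
        / K ^ 2 := by
  have hYm : ∀ᵐ ω ∂μ, min c Z ≤ (∑ k ∈ range K, w k ω) / K := by
    filter_upwards [ae_all_iff.2 hlb] with ω hω
    simpa [expect_eq_sum_div_card] using
      le_expect (nonempty_range_iff.2 (by omega)) fun k _ => (min_le_left c Z).trans (hω k)
  have hYL4 : MemLp (fun ω => (∑ k ∈ range K, w k ω) / K) 4 μ := by
    simpa only [div_eq_mul_inv] using (memLp_finsetSum (range K) fun k _ =>
      (hid k).symm.memLp_snd hL4).mul_const (K : ℝ)⁻¹
  have htaylor := abs_integral_log_sub_integral_logTaylor3_le hYL4 (lt_min hc hZ)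
    (min_le_right c Z) hYm
  obtain ⟨h1, h2, h3, h4⟩ := integral_mean_sub_pow hmeas hindep hid hmean hL4 (K := K) (by omega)
  rw [integral_logTaylor3 (hYL4.mono_exponent (by norm_num)), h1, h2, h3, h4] at htaylor
  rw [variance_eq_integral (hmeas 0).aemeasurable, hmean]
  set L := ∫ ω, log ((∑ k ∈ range K, w k ω) / K) ∂μ
  set σ2 := ∫ ω, (w 0 ω - Z) ^ 2 ∂μ
  set κ3 := ∫ ω, (w 0 ω - Z) ^ 3 ∂μ
  set κ4 := ∫ ω, (w 0 ω - Z) ^ 4 ∂μ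
  have hκ4 : 0 ≤ κ4 := integral_nonneg fun ω => by positivity
  have hm : 0 < min c Z := lt_min hc hZ
  have hrem : (κ4 + 3 * (K - 1) * σ2 ^ 2) / K ^ 3 / (4 * min c Z * Z ^ 3)
      ≤ (κ4 + 3 * σ2 ^ 2) / (4 * min c Z * Z ^ 3) / K ^ 2 := by
    rw [div_div, div_div, div_le_div_iff₀ (by positivity) (by positivity)]
    have hK1 : (1 : ℝ) ≤ K := by exact_mod_cast hK
    have : 0 ≤ (K - 1) * κ4 + 3 * σ2 ^ 2 :=
      add_nonneg (mul_nonneg (sub_nonneg.2 hK1) hκ4) (by positivity)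
    nlinarith [mul_nonneg this (by positivity : (0 : ℝ) ≤ K ^ 2 * (4 * min c Z * Z ^ 3))]
  calc |L - log Z + σ2 / (2 * K * Z ^ 2)|
      = |(L - (log Z + 0 / Z - σ2 / K / (2 * Z ^ 2) + κ3 / K ^ 2 / (3 * Z ^ 3)))
          + κ3 / (3 * Z ^ 3) / K ^ 2| := by
        congr 1; field_simp; ring
    _ ≤ (κ4 + 3 * σ2 ^ 2) / (4 * min c Z * Z ^ 3) / K ^ 2 + |κ3| / (3 * Z ^ 3) / K ^ 2 := by
        refine (abs_add_le _ _).trans (add_le_add (htaylor.trans hrem) (le_of_eq ?_))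
        rw [abs_div, abs_div, abs_of_pos (by positivity : (0 : ℝ) < 3 * Z ^ 3),
          abs_of_pos (by positivity : (0 : ℝ) < K ^ 2)]
    _ = _ := by ring

end

/-- Bias expansion of `E[log Ẑ]` for the empirical mean `Ẑ` of `K` i.i.d. variables
bounded below by `c > 0` with mean `Z` and finite fourth moment:
`|E[log Ẑ] − log Z + Var(w)/(2KZ²)| ≤ C/K²` for some constant `C`. -/
theorem log_mean_bias_expansion
    {Ω : Type*} [MeasurableSpace Ω] (μ : Measure Ω) [IsProbabilityMeasure μ]
    (w : ℕ → Ω → ℝ) (hmeas : ∀ k, Measurable (w k))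
    (hindep : iIndepFun w μ)
    (hid : ∀ k, IdentDistrib (w k) (w 0) μ μ)
    (c : ℝ) (hc : 0 < c) (hlb : ∀ k, ∀ᵐ ω ∂μ, c ≤ w k ω)
    (Z : ℝ) (hZ : 0 < Z) (hmean : ∫ ω, w 0 ω ∂μ = Z)
    (hL4 : MemLp (w 0) 4 μ) :
    ∃ C : ℝ, ∀ K : ℕ, 1 ≤ K →
      |(∫ ω, Real.log ((∑ k ∈ Finset.range K, w k ω) / K) ∂μ)
        - Real.log Z + variance (w 0) μ / (2 * K * Z ^ 2)| ≤ C / K ^ 2 :=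
  ⟨_, fun _ hK => abs_integral_log_mean_sub_log_add_variance_le hmeas hindep hid hc hlb hZ
    hmean hL4 hK⟩
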